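/- arXiv:1501.03090 — 8 statements merged into one kernel-verified Lean document; each statement's English description precedes it below -/
import Mathlib

section
/- If G is a group in which there exists an element x whose cyclic subgroup ⟨x⟩ is 2-subnormal in G (i.e. ⟨x⟩ is normal in its normal closure ⟨x^G⟩), then the normal closure ⟨x^G⟩ of x in G is nilpotent of class at most 2. -/
/-!
Since `⟨x⟩ ◁ N := ⟨x^G⟩` and `N ◁ G`, the group `N` normalizes every conjugate `⟨x^g⟩`.
The automorphism group of a cyclic group is abelian, so `⁅N, N⁆` acts trivially on each
`⟨x^g⟩`; as the conjugates of `x` generate `N`, the commutator subgroup `⁅N, N⁆` is central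
in `N`.
-/

namespace Subgroup

variable {G : Type*} [Group G]

theorem commutator_normalizer_le_centralizer (H : Subgroup G) [IsCyclic H] :
    ⁅normalizer (H : Set G), normalizer (H : Set G)⁆ ≤ centralizer (H : Set G) := by
  let _ : CommGroup (MulAut H) := (IsCyclic.mulAutMulEquiv H).toMonoidHom.commGroupOfInjective
    (IsCyclic.mulAutMulEquiv H).injective
  have hker := Abelianization.commutator_subset_ker H.normalizerMonoidHom
  rw [normalizerMonoidHom_ker, ← map_subtype_le_map_subtype, map_subtype_commutator,
    subgroupOf_map_subtype] at hker
  exact hker.trans inf_le_left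

theorem le_normalizer_zpowers_conj {N : Subgroup G} [N.Normal] {x : G}
    (h : N ≤ normalizer (zpowers x : Set G)) (g : G) :
    N ≤ normalizer (zpowers (g * x * g⁻¹) : Set G) :=
  calc N = N.map (MulAut.conj g).toMonoidHom := (Normal.map_conj_eq N g).symm
    _ ≤ (normalizer (zpowers x : Set G)).map (MulAut.conj g).toMonoidHom := map_mono h
    _ ≤ normalizer ((zpowers x).map (MulAut.conj g).toMonoidHom : Set G) := le_normalizer_map _
    _ = normalizer (zpowers (g * x * g⁻¹) : Set G) := by rw [MonoidHom.map_zpowers]; rfl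

theorem commutator_closure_le_centralizer_of_le_normalizer_zpowers {S : Set G}
    (h : ∀ s ∈ S, closure S ≤ normalizer (zpowers s : Set G)) :
    ⁅closure S, closure S⁆ ≤ centralizer (closure S : Set G) := by
  rw [centralizer_closure]
  refine fun c hc ↦ mem_centralizer_iff.mpr fun s hs ↦ ?_
  have hc' : c ∈ centralizer (zpowers s : Set G) :=
    commutator_normalizer_le_centralizer (zpowers s) (commutator_mono (h s hs) (h s hs) hc)
  exact mem_centralizer_iff.mp hc' s (mem_zpowers s)

theorem top_lowerCentralSeries_two_eq_bot_of_commutator_le_centralizer {N : Subgroup G}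
    (h : ⁅N, N⁆ ≤ centralizer (N : Set G)) :
    (⊤ : Subgroup N).lowerCentralSeries 2 = ⊥ := by
  apply lowerCentralSeries_succ_eq_bot
  rw [top_lowerCentralSeries_one]
  rw [← map_subtype_commutator] at h
  simpa [SetLike.le_def, mem_center_iff, mem_centralizer_iff] using h

end Subgroup

open Subgroup in
/-- If ⟨x⟩ is 2-subnormal in G (i.e. normal in its normal closure ⟨x^G⟩),
then ⟨x^G⟩ is nilpotent of class at most 2. -/
theorem stmt_0 {G : Type*} [Group G] (x : G)
    (h : ((Subgroup.zpowers x).subgroupOf (Subgroup.normalClosure {x})).Normal) :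
    (⊤ : Subgroup ↥(Subgroup.normalClosure {x})).lowerCentralSeries 2 = ⊥ := by
  have hx : zpowers x ≤ normalClosure {x} :=
    zpowers_le.mpr (subset_normalClosure (Set.mem_singleton x))
  have hN : normalClosure {x} ≤ normalizer (zpowers x : Set G) :=
    (normal_subgroupOf_iff_le_normalizer hx).mp h
  apply top_lowerCentralSeries_two_eq_bot_of_commutator_le_centralizer
  apply commutator_closure_le_centralizer_of_le_normalizer_zpowers
  intro y hy
  obtain ⟨_, rfl, hconj⟩ := Group.mem_conjugatesOfSet_iff.mp hy
  obtain ⟨g, rfl⟩ := isConj_iff.mp hconj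
  exact le_normalizer_zpowers_conj hN g
end

section
/- Let G be a group and x ∈ G such that the cyclic subgroup ⟨x⟩ is 2-subnormal in G. Then x is a left 3-Engel element of G, i.e. [g, x, x, x] = 1 for all g ∈ G. -/
/-- The paper's commutator convention: [a,b] = a⁻¹ b⁻¹ a b. -/
def pc {G : Type*} [Group G] (a b : G) : G := a⁻¹ * b⁻¹ * a * b

/-- A subgroup H is 2-subnormal in G if H ⊴ K ⊴ G for some subgroup K. -/
def IsTwoSubnormal {G : Type*} [Group G] (H : Subgroup G) : Prop :=
  ∃ K : Subgroup G, H ≤ K ∧ (H.subgroupOf K).Normal ∧ K.Normal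

/-!
Write `K` for the normal subgroup with `⟨x⟩ ⊴ K ⊴ G`. Since `K` is normal and contains `x`,
`[g, x] ∈ K`; since `⟨x⟩` is normal in `K`, `[[g, x], x] ∈ ⟨x⟩`; and a power of `x` commutes
with `x`, so `[[[g, x], x], x] = 1`.
-/

section

variable {G : Type*} [Group G]

lemma pc_mem_of_normal {N : Subgroup G} (hN : N.Normal) (a : G) {b : G} (hb : b ∈ N) :
    pc a b ∈ N := by
  have hconj : a⁻¹ * b⁻¹ * a ∈ N := by
    simpa using hN.conj_mem b⁻¹ (N.inv_mem hb) a⁻¹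
  exact N.mul_mem hconj hb

lemma pc_mem_of_subgroupOf_normal {H K : Subgroup G} (hHK : H ≤ K)
    (hH : (H.subgroupOf K).Normal) {a b : G} (ha : a ∈ K) (hb : b ∈ H) : pc a b ∈ H := by
  have hb' : (⟨b, hHK hb⟩ : K) ∈ H.subgroupOf K := Subgroup.mem_subgroupOf.mpr hb
  have h := pc_mem_of_normal hH ⟨a, ha⟩ hb'
  rwa [Subgroup.mem_subgroupOf] at h

lemma pc_eq_one_of_commute {a b : G} (h : Commute a b) : pc a b = 1 := by
  rw [pc, mul_assoc (a⁻¹ * b⁻¹), h.eq]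
  group

end

/-- If ⟨x⟩ is 2-subnormal in G then x is a left 3-Engel element:
[g,x,x,x] = 1 for all g ∈ G. -/
theorem stmt_1 {G : Type*} [Group G] (x : G)
    (h : IsTwoSubnormal (Subgroup.zpowers x)) :
    ∀ g : G, pc (pc (pc g x) x) x = 1 := by
  obtain ⟨K, hle, hHn, hKn⟩ := h
  intro g
  have hxK : x ∈ K := hle (Subgroup.mem_zpowers x)
  obtain ⟨k, hk⟩ := pc_mem_of_subgroupOf_normal hle hHn (pc_mem_of_normal hKn g hxK)
    (Subgroup.mem_zpowers x)
  rw [← hk]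
  exact pc_eq_one_of_commute ((Commute.refl x).zpow_left k)
end

section
/- Let G be a group, x ∈ G with ⟨x⟩ 2-subnormal in G, and suppose the commutator subgroup H of the normal closure ⟨x^G⟩ centralizes x. Then H ≤ C_G(x^g) for every g ∈ G, and hence H is contained in the center of ⟨x^G⟩. -/
/-!
The commutator subgroup `H` of `N = ⟨x^G⟩` is normal in `G`, so its centralizer is normal too.
Since `x` lies in `C_G(H)`, so does the whole normal closure `N`; that is, `H` centralizes `N`,
and in particular every conjugate of `x`.
-/

namespace Subgroup

variable {G : Type*} [Group G]

theorem le_centralizer_normalClosure {H : Subgroup G} [H.Normal] {s : Set G}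
    (hH : H ≤ centralizer s) : H ≤ centralizer (normalClosure s) := by
  rw [le_centralizer_iff]
  refine normalClosure_le_normal fun y hy h hh => ?_
  exact (mem_centralizer_iff.mp (hH hh) y hy).symm

end Subgroup

theorem stmt_2_general {G : Type*} [Group G] (x : G)
    (hcent : ⁅Subgroup.normalClosure {x}, Subgroup.normalClosure {x}⁆ ≤
      Subgroup.centralizer {x}) :
    (∀ g : G, ⁅Subgroup.normalClosure {x}, Subgroup.normalClosure {x}⁆ ≤
        Subgroup.centralizer {g⁻¹ * x * g}) ∧
    (∀ h ∈ ⁅Subgroup.normalClosure {x}, Subgroup.normalClosure {x}⁆,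
      ∀ a ∈ Subgroup.normalClosure {x}, h * a = a * h) := by
  have hN := Subgroup.le_centralizer_normalClosure hcent
  refine ⟨fun g => hN.trans (Subgroup.centralizer_le (Set.singleton_subset_iff.mpr ?_)),
    fun h hh a ha => (Subgroup.mem_centralizer_iff.mp (hN hh) a ha).symm⟩
  simpa using Subgroup.normalClosure_normal.conj_mem x (Subgroup.subset_normalClosure (Set.mem_singleton x)) g⁻¹

/-- If ⟨x⟩ is 2-subnormal in G (normal in its normal closure) and the
commutator subgroup H of ⟨x^G⟩ centralizes x, then H ≤ C_G(x^g) for all g ∈ G, and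
hence H is contained in the center of ⟨x^G⟩. -/
theorem stmt_2 {G : Type*} [Group G] (x : G)
    (hsub : ((Subgroup.zpowers x).subgroupOf (Subgroup.normalClosure {x})).Normal)
    (hcent : ⁅Subgroup.normalClosure {x}, Subgroup.normalClosure {x}⁆ ≤
      Subgroup.centralizer {x}) :
    (∀ g : G, ⁅Subgroup.normalClosure {x}, Subgroup.normalClosure {x}⁆ ≤
        Subgroup.centralizer {g⁻¹ * x * g}) ∧
    (∀ h ∈ ⁅Subgroup.normalClosure {x}, Subgroup.normalClosure {x}⁆,
      ∀ a ∈ Subgroup.normalClosure {x}, h * a = a * h) :=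
  stmt_2_general x hcent
end

section
/- Let G be a group and x ∈ G an element of infinite order such that ⟨x⟩ is normal in the normal closure ⟨x^G⟩. Then x is central in ⟨x^G⟩; in particular ⟨x^G⟩ is abelian. -/
/-!
Since `⟨x⟩ ≅ ℤ` has only the automorphisms `±1`, every `a ∈ ⟨x^G⟩` conjugates `x` to `x` or `x⁻¹`,
and, `⟨x^G⟩` being normal, every `a ∈ ⟨x^G⟩` likewise conjugates each conjugate `y` of `x` to
`y` or `y⁻¹`. If `x` and `y` inverted each other we would get `x² = y⁻²` and then `x⁻² = x²`,
contradicting the infinite order of `x`; so `x` commutes with all its conjugates, and these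
generate `⟨x^G⟩`.
-/

open Subgroup

section

variable {G : Type*} [Group G] {x y a : G}

theorem conj_eq_self_or_inv_of_mem_normalizer_zpowers (hx : ¬IsOfFinOrder x)
    (ha : a ∈ normalizer (zpowers x)) : a * x * a⁻¹ = x ∨ a * x * a⁻¹ = x⁻¹ := by
  have hx_mem : x ∈ zpowers x := mem_zpowers x
  obtain ⟨k, hk⟩ := mem_zpowers_iff.1 ((mem_normalizer_iff.1 ha x).1 hx_mem)
  obtain ⟨m, hm⟩ := mem_zpowers_iff.1 ((mem_normalizer_iff''.1 ha x).1 hx_mem)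
  have hkm : x ^ (k * m) = x ^ (1 : ℤ) := by
    rw [zpow_mul, hk, conj_zpow, hm, zpow_one]; group
  rcases Int.eq_one_or_neg_one_of_mul_eq_one (injective_zpow_iff_not_isOfFinOrder.2 hx hkm)
    with rfl | rfl
  · exact .inl (by rw [← hk, zpow_one])
  · exact .inr (by rw [← hk, zpow_neg_one])

theorem map_conj_eq_self_or_inv {H : Type*} [Group H] (f : G →* H)
    (h : a * x * a⁻¹ = x ∨ a * x * a⁻¹ = x⁻¹) :
    f a * f x * (f a)⁻¹ = f x ∨ f a * f x * (f a)⁻¹ = (f x)⁻¹ := by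
  simpa only [← map_inv, ← map_mul] using h.imp (congrArg f) (congrArg f)

theorem commute_of_conj_eq_self_or_inv (hx : ¬IsOfFinOrder x)
    (hyx : y * x * y⁻¹ = x ∨ y * x * y⁻¹ = x⁻¹) (hxy : x * y * x⁻¹ = y ∨ x * y * x⁻¹ = y⁻¹) :
    Commute x y := by
  rcases hyx with hyx | hyx
  · exact (mul_inv_eq_iff_eq_mul.1 hyx).symm
  rcases hxy with hxy | hxy
  · exact mul_inv_eq_iff_eq_mul.1 hxy
  exfalso
  refine hx (isOfFinOrder_iff_pow_eq_one.2 ⟨4, by norm_num, ?_⟩)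
  have hsq : x ^ 2 = y⁻¹ ^ 2 :=
    calc x ^ 2 = x * (y * x * y⁻¹)⁻¹ := by rw [hyx, inv_inv, sq]
      _ = (x * y * x⁻¹) * y⁻¹ := by group
      _ = y⁻¹ ^ 2 := by rw [hxy, sq]
  have hinv : x⁻¹ ^ 2 = x ^ 2 := by rw [← hyx, conj_pow, hsq]; group
  calc x ^ 4 = (x⁻¹ ^ 2)⁻¹ * x ^ 2 := by group
    _ = 1 := by rw [hinv, inv_mul_cancel]

theorem isMulCommutative_normalClosure_singleton (h : ∀ g : G, Commute x (g * x * g⁻¹)) :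
    IsMulCommutative (normalClosure {x}) := by
  refine isMulCommutative_closure ?_
  rintro _ hy _ hz
  obtain ⟨_, rfl, hgy⟩ := Group.mem_conjugatesOfSet_iff.1 hy
  obtain ⟨_, rfl, hkz⟩ := Group.mem_conjugatesOfSet_iff.1 hz
  obtain ⟨g, rfl⟩ := isConj_iff.1 hgy
  obtain ⟨k, rfl⟩ := isConj_iff.1 hkz
  simpa [mul_assoc] using ((h (k⁻¹ * g)).map (MulAut.conj k)).symm.eq

end

/-- If x has infinite order and ⟨x⟩ is normal in the normal closure ⟨x^G⟩,
then x is central in ⟨x^G⟩; in particular ⟨x^G⟩ is abelian. -/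
theorem stmt_3 {G : Type*} [Group G] (x : G) (hx : ¬ IsOfFinOrder x)
    (h : ((Subgroup.zpowers x).subgroupOf (Subgroup.normalClosure {x})).Normal) :
    (∀ a ∈ Subgroup.normalClosure {x}, a * x = x * a) ∧
    (∀ a ∈ Subgroup.normalClosure {x}, ∀ b ∈ Subgroup.normalClosure ({x} : Set G),
      a * b = b * a) := by
  have hxN : x ∈ normalClosure {x} := subset_normalClosure rfl
  have hconj : ∀ a ∈ normalClosure {x}, a * x * a⁻¹ = x ∨ a * x * a⁻¹ = x⁻¹ := fun a ha ↦
    conj_eq_self_or_inv_of_mem_normalizer_zpowers hx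
      ((normal_subgroupOf_iff_le_normalizer (zpowers_le.2 hxN)).1 h ha)
  have hconjN (g : G) {a : G} (ha : a ∈ normalClosure {x}) : g * a * g⁻¹ ∈ normalClosure {x} :=
    normalClosure_normal.conj_mem a ha g
  have hcomm (g : G) : Commute x (g * x * g⁻¹) := by
    refine commute_of_conj_eq_self_or_inv hx (hconj _ (hconjN g hxN)) ?_
    simpa [mul_assoc] using map_conj_eq_self_or_inv (MulAut.conj g).toMonoidHom
      (hconj _ (hconjN g⁻¹ hxN))
  have := isMulCommutative_normalClosure_singleton hcomm
  have hmul_comm (a : G) (ha : a ∈ normalClosure {x}) (b : G) (hb : b ∈ normalClosure {x}) :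
    a * b = b * a := setLike_mul_comm ha hb
  exact ⟨fun a ha ↦ hmul_comm a ha x hxN, hmul_comm⟩
end

section
/- Let G be a group, n ≥ 1, and N a normal subgroup of G contained in T_n(G). If G is a generalized n-Baer group (T_n(G) ≠ G), then so is G/N; more precisely T_n(G/N) ≤ T_n(G)/N. -/
/-- A subgroup H is n-subnormal in G if there is a chain H = H₀ ⊴ H₁ ⊴ … ⊴ Hₙ = G. -/
def IsNSubnormal {G : Type*} [Group G] : ℕ → Subgroup G → Prop
  | 0, H => H = ⊤
  | n + 1, H => ∃ K : Subgroup G, H ≤ K ∧ (H.subgroupOf K).Normal ∧ IsNSubnormal n K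

/-- T_n(G) is the subgroup generated by all elements whose cyclic subgroup is not
n-subnormal in G. -/
def Tn (G : Type*) [Group G] (n : ℕ) : Subgroup G :=
  Subgroup.closure {x : G | ¬ IsNSubnormal n (Subgroup.zpowers x)}

/-! Images of a subnormal chain under a surjection form a subnormal chain of the same length, so an
element of `G ⧸ N` whose cyclic subgroup is not n-subnormal lifts to an element of `G` with the
same property. Since `N ≤ T_n(G)`, the subgroup `T_n(G)` is the full preimage of its image,
so `T_n(G) / N = ⊤` forces `T_n(G) = ⊤`. -/

section

variable {G G' : Type*} [Group G] [Group G']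

theorem Subgroup.Normal.subgroupOf_map {H K : Subgroup G} (f : G →* G') (hHK : H ≤ K)
    (hH : (H.subgroupOf K).Normal) : ((H.map f).subgroupOf (K.map f)).Normal :=
  (Subgroup.normal_subgroupOf_iff_le_normalizer (Subgroup.map_mono hHK)).mpr <|
    (Subgroup.map_mono ((Subgroup.normal_subgroupOf_iff_le_normalizer hHK).mp hH)).trans
      (Subgroup.le_normalizer_map f)

theorem IsNSubnormal.map {f : G →* G'} (hf : Function.Surjective f) :
    ∀ {n : ℕ} {H : Subgroup G}, IsNSubnormal n H → IsNSubnormal n (H.map f)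
  | 0, _, rfl => Subgroup.map_top_of_surjective f hf
  | _ + 1, _, ⟨K, hHK, hH, hK⟩ =>
    ⟨K.map f, Subgroup.map_mono hHK, hH.subgroupOf_map f hHK, hK.map hf⟩

theorem Tn_le_map_of_surjective {f : G →* G'} (hf : Function.Surjective f) (n : ℕ) :
    Tn G' n ≤ (Tn G n).map f := by
  rw [Tn, Subgroup.closure_le]
  intro x hx
  obtain ⟨g, rfl⟩ := hf x
  refine ⟨g, Subgroup.subset_closure fun hg => hx ?_, rfl⟩
  simpa only [MonoidHom.map_zpowers] using hg.map hf

end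

theorem stmt_7_general {G : Type*} [Group G] (n : ℕ) (N : Subgroup G)
    [N.Normal] (hN : N ≤ Tn G n) :
    Tn (G ⧸ N) n ≤ (Tn G n).map (QuotientGroup.mk' N) ∧
    (Tn G n ≠ ⊤ → Tn (G ⧸ N) n ≠ ⊤) := by
  have hle := Tn_le_map_of_surjective (QuotientGroup.mk'_surjective N) n
  refine ⟨hle, fun hne htop => hne ?_⟩
  have hker : (QuotientGroup.mk' N).ker ≤ Tn G n := by rwa [QuotientGroup.ker_mk']
  have hmap : (Tn G n).map (QuotientGroup.mk' N) = ⊤ := top_le_iff.mp (htop ▸ hle)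
  rw [← Subgroup.comap_map_eq_self hker, hmap, Subgroup.comap_top]

/-- If N ⊴ G with N ≤ T_n(G), then T_n(G/N) ≤ T_n(G)/N; in particular
if G is a generalized n-Baer group (T_n(G) ≠ G), then so is G/N. -/
theorem stmt_7 {G : Type*} [Group G] (n : ℕ) (hn : 1 ≤ n) (N : Subgroup G)
    [N.Normal] (hN : N ≤ Tn G n) :
    Tn (G ⧸ N) n ≤ (Tn G n).map (QuotientGroup.mk' N) ∧
    (Tn G n ≠ ⊤ → Tn (G ⧸ N) n ≠ ⊤) :=
  stmt_7_general n N hN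
end

section
/- Let G be a generalized 2-Baer group, let x ∈ G \ T₂(G) have infinite order, and let g ∈ G. Then there exists an integer n ≥ 0 such that xⁿg lies in G \ T₂(G) and has infinite order. -/
/-- T₂(G) is the subgroup generated by all elements whose cyclic subgroup is not
2-subnormal in G. -/
def T2 (G : Type*) [Group G] : Subgroup G :=
  Subgroup.closure {x : G | ¬ IsTwoSubnormal (Subgroup.zpowers x)}

namespace Subgroup

variable {G : Type*} [Group G]

theorem le_normalizer_map_conj {H K : Subgroup G} [K.Normal] (hK : K ≤ normalizer H) (g : G) :
    K ≤ normalizer (H.map (MulAut.conj g) : Subgroup G) := by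
  rw [← Normal.map_conj_eq K g]
  exact (map_mono hK).trans (map_equiv_normalizer_eq H (MulAut.conj g)).le

theorem finite_finsetSup_of_le_normalizer {ι : Type*} {H : ι → Subgroup G} {K : Subgroup G}
    (hHK : ∀ i, H i ≤ K) (hKH : ∀ i, K ≤ normalizer (H i)) (hH : ∀ i, (H i : Set G).Finite)
    (s : Finset ι) : ((s.sup H : Subgroup G) : Set G).Finite := by
  classical
  induction s using Finset.induction_on with
  | empty => simp
  | insert i s _ ih =>
    rw [Finset.sup_insert,
      coe_mul_of_right_le_normalizer_left _ _ ((Finset.sup_le fun j _ ↦ hHK j).trans (hKH i))]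
    exact (hH i).mul ih

end Subgroup

open Subgroup

section

variable {G : Type*} [Group G]

theorem mul_pow_mul_inv_pow_mem_sup_map_conj (u v : G) (n : ℕ) :
    (u * v) ^ n * (v ^ n)⁻¹ ∈
      (Finset.range n).sup fun i ↦ (zpowers u).map (MulAut.conj (v ^ i)) := by
  induction n with
  | zero => simp
  | succ n ih =>
    have hconj : v ^ n * u * (v ^ n)⁻¹ ∈ (zpowers u).map (MulAut.conj (v ^ n)) :=
      ⟨u, mem_zpowers u, rfl⟩
    have hsplit : (u * v) ^ (n + 1) * (v ^ (n + 1))⁻¹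
        = (u * v) ^ n * (v ^ n)⁻¹ * (v ^ n * u * (v ^ n)⁻¹) := by
      simp only [pow_succ, mul_inv_rev, mul_assoc, inv_mul_cancel_left, mul_inv_cancel_left]
    rw [hsplit, Finset.range_add_one, Finset.sup_insert]
    exact mul_mem (mem_sup_right ih) (mem_sup_left hconj)

theorem IsTwoSubnormal.isOfFinOrder_mul {u v : G} (hsub : IsTwoSubnormal (zpowers u))
    (hu : IsOfFinOrder u) (hv : IsOfFinOrder v) : IsOfFinOrder (u * v) := by
  obtain ⟨K, huK, hnorm, hK⟩ := hsub
  have hKu : K ≤ normalizer (zpowers u : Subgroup G) :=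
    (normal_subgroupOf_iff_le_normalizer huK).mp hnorm
  set H : ℕ → Subgroup G := fun i ↦ (zpowers u).map (MulAut.conj (v ^ i))
  have hHK : ∀ i, H i ≤ K := fun i ↦ (map_mono huK).trans (Normal.map_conj_eq K (v ^ i)).le
  have hKH : ∀ i, K ≤ normalizer (H i) := fun i ↦ le_normalizer_map_conj hKu (v ^ i)
  have hH : ∀ i, (H i : Set G).Finite := fun i ↦ by
    simpa only [H, coe_map] using hu.finite_zpowers.image _
  set L := (Finset.range (orderOf v)).sup H
  have : Finite L := (finite_finsetSup_of_le_normalizer hHK hKH hH _).to_subtype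
  have hmem : (u * v) ^ orderOf v ∈ L := by
    simpa only [pow_orderOf_eq_one, inv_one, mul_one] using
      mul_pow_mul_inv_pow_mem_sup_map_conj u v (orderOf v)
  exact (Submonoid.isOfFinOrder_coe.mpr (isOfFinOrder_of_finite (⟨_, hmem⟩ : L))).of_pow
    hv.orderOf_pos.ne'

theorem isTwoSubnormal_zpowers_of_notMem_T2 {y : G} (hy : y ∉ T2 G) :
    IsTwoSubnormal (zpowers y) :=
  not_not.mp fun h ↦ hy (subset_closure h)

theorem exists_pow_mul_notMem_of_notMem {S : Subgroup G} {x : G} (hx : x ∉ S) (g : G) (k : ℕ) :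
    ∃ n, k ≤ n ∧ n ≤ k + 1 ∧ x ^ n * g ∉ S := by
  by_contra! h
  apply hx
  have hx_eq : x = x ^ (k + 1) * g * (x ^ k * g)⁻¹ := by group
  rw [hx_eq]
  exact mul_mem (h (k + 1) (by omega) le_rfl) (inv_mem (h k le_rfl (by omega)))

end

theorem stmt_10_general {G : Type*} [Group G] (x : G) (hxT : x ∉ T2 G)
    (hx : ¬ IsOfFinOrder x) (g : G) :
    ∃ n : ℕ, x ^ n * g ∉ T2 G ∧ ¬ IsOfFinOrder (x ^ n * g) := by
  obtain ⟨a, -, ha, haT⟩ := exists_pow_mul_notMem_of_notMem hxT g 0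
  obtain ⟨b, hb, -, hbT⟩ := exists_pow_mul_notMem_of_notMem hxT g 2
  by_cases hfa : IsOfFinOrder (x ^ a * g)
  · refine ⟨b, hbT, fun hfb ↦ hx ?_⟩
    obtain ⟨d, rfl⟩ : ∃ d, b = a + (d + 1) := ⟨b - a - 1, by omega⟩
    have hfin := (isTwoSubnormal_zpowers_of_notMem_T2 haT).isOfFinOrder_mul hfa hfb.inv
    have hx_pow : x ^ a * g * (x ^ (a + (d + 1)) * g)⁻¹ = (x ^ (d + 1))⁻¹ := by
      rw [pow_add]; group
    rw [hx_pow, isOfFinOrder_inv_iff] at hfin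
    exact hfin.of_pow d.succ_ne_zero
  · exact ⟨a, haT, hfa⟩

/-- If G is a generalized 2-Baer group, x ∈ G \ T₂(G) has infinite
order and g ∈ G, then there is n ≥ 0 with xⁿg ∈ G \ T₂(G) of infinite order. -/
theorem stmt_10 {G : Type*} [Group G] (hG : T2 G ≠ ⊤) (x : G) (hxT : x ∉ T2 G)
    (hx : ¬ IsOfFinOrder x) (g : G) :
    ∃ n : ℕ, x ^ n * g ∉ T2 G ∧ ¬ IsOfFinOrder (x ^ n * g) :=
  stmt_10_general x hxT hx g
end

section
/- A non-torsion generalized 2-Baer group is a 2-Engel group, i.e. [a,b,b] = 1 for all a, b. Consequently, for non-torsion groups, being a 2-Baer group, a generalized 2-Baer group, and a 2-Engel group are all equivalent. -/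
namespace Stmt11Aux

open Subgroup Pointwise

variable {G : Type*} [Group G]

/-- goodness: every element of the normal closure of x normalizes ⟨x⟩. -/
def Good (x : G) : Prop :=
  ∀ n ∈ Subgroup.normalClosure ({x} : Set G), ∀ k : ℤ, n * x ^ k * n⁻¹ ∈ zpowers x

lemma mem_ncl_self (x : G) : x ∈ Subgroup.normalClosure ({x} : Set G) :=
  subset_normalClosure rfl

lemma conj_mem_ncl (x g : G) : g⁻¹ * x * g ∈ Subgroup.normalClosure ({x} : Set G) := by
  have := (Subgroup.normalClosure_normal (s := ({x} : Set G))).conj_mem x (mem_ncl_self x) g⁻¹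
  simpa using this

lemma conj_mem_ncl' (x g : G) : g * x * g⁻¹ ∈ Subgroup.normalClosure ({x} : Set G) :=
  (Subgroup.normalClosure_normal (s := ({x} : Set G))).conj_mem x (mem_ncl_self x) g

lemma ncl_conj (x g : G) :
    Subgroup.normalClosure ({g⁻¹ * x * g} : Set G) = Subgroup.normalClosure ({x} : Set G) := by
  apply le_antisymm
  · exact normalClosure_le_normal (by simpa using conj_mem_ncl x g)
  · apply normalClosure_le_normal
    have h := conj_mem_ncl' (g⁻¹ * x * g) g
    have e : g * (g⁻¹ * x * g) * g⁻¹ = x := by group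
    rw [e] at h
    simpa using h

lemma conj_pow' (g x : G) (i : ℕ) : (g⁻¹ * x * g) ^ i = g⁻¹ * x ^ i * g := by
  have := conj_pow (i := i) (a := g⁻¹) (b := x)
  simpa using this

lemma conj_zpow' (g x : G) (i : ℤ) : (g⁻¹ * x * g) ^ i = g⁻¹ * x ^ i * g := by
  have := conj_zpow (i := i) (a := g⁻¹) (b := x)
  simpa using this

lemma good_conj {x : G} (hx : Good x) (g : G) : Good (g⁻¹ * x * g) := by
  intro n hn k
  rw [ncl_conj] at hn
  have hn' : g * n * g⁻¹ ∈ Subgroup.normalClosure ({x} : Set G) :=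
    (Subgroup.normalClosure_normal).conj_mem n hn g
  obtain ⟨j, hj⟩ := mem_zpowers_iff.mp (hx _ hn' k)
  refine mem_zpowers_iff.mpr ⟨j, ?_⟩
  rw [conj_zpow', conj_zpow']
  rw [show g⁻¹ * x ^ j * g = g⁻¹ * ((g * n * g⁻¹) * x ^ k * (g * n * g⁻¹)⁻¹) * g by rw [hj],
    show n * (g⁻¹ * x ^ k * g) * n⁻¹ = g⁻¹ * (g * n * g⁻¹ * x ^ k * (g * n * g⁻¹)⁻¹) * g by group]

lemma good_conj' {x : G} (hx : Good x) (g : G) : Good (g * x * g⁻¹) := by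
  have := good_conj hx g⁻¹
  simpa using this

lemma zpowers_inv_eq (x : G) : zpowers x⁻¹ = zpowers x := by
  ext y
  simp only [mem_zpowers_iff]
  constructor
  · rintro ⟨k, rfl⟩; exact ⟨-k, by rw [zpow_neg, inv_zpow]⟩
  · rintro ⟨k, rfl⟩; exact ⟨-k, by rw [zpow_neg, inv_zpow, inv_inv]⟩

lemma ncl_inv_eq (x : G) :
    Subgroup.normalClosure ({x⁻¹} : Set G) = Subgroup.normalClosure ({x} : Set G) := by
  apply le_antisymm
  · exact normalClosure_le_normal (by simpa using inv_mem (mem_ncl_self x))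
  · exact normalClosure_le_normal (by simpa using inv_mem (mem_ncl_self x⁻¹))

lemma good_inv {x : G} (hx : Good x) : Good x⁻¹ := by
  intro n hn k
  rw [ncl_inv_eq] at hn
  rw [zpowers_inv_eq]
  have : (x⁻¹) ^ k = x ^ (-k) := by rw [zpow_neg, inv_zpow]
  rw [this]
  exact hx n hn (-k)

lemma isOfFinOrder_conj {x : G} (g : G) (h : IsOfFinOrder x) :
    IsOfFinOrder (g⁻¹ * x * g) := by
  obtain ⟨n, hn, hx⟩ := isOfFinOrder_iff_pow_eq_one.mp h
  exact isOfFinOrder_iff_pow_eq_one.mpr ⟨n, hn, by rw [conj_pow', hx]; group⟩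

lemma not_isOfFinOrder_conj {x : G} (g : G) (h : ¬ IsOfFinOrder x) :
    ¬ IsOfFinOrder (g⁻¹ * x * g) := by
  intro hf
  apply h
  have := isOfFinOrder_conj g⁻¹ hf
  have e : g⁻¹⁻¹ * (g⁻¹ * x * g) * g⁻¹ = x := by group
  rwa [e] at this

lemma isOfFinOrder_of_pow {z : G} {m : ℕ} (hm : 0 < m) (h : IsOfFinOrder (z ^ m)) :
    IsOfFinOrder z := by
  obtain ⟨n, hn, hz⟩ := isOfFinOrder_iff_pow_eq_one.mp h
  exact isOfFinOrder_iff_pow_eq_one.mpr ⟨m * n, by positivity, by rw [pow_mul]; exact hz⟩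

lemma not_isOfFinOrder_pow {z : G} {m : ℕ} (hm : 0 < m) (h : ¬ IsOfFinOrder z) :
    ¬ IsOfFinOrder (z ^ m) := fun hf => h (isOfFinOrder_of_pow hm hf)



/-- helper: x² = 1 gives finite order. -/
lemma finOrder_of_sq {x : G} (h : x * x = 1) : IsOfFinOrder x :=
  isOfFinOrder_iff_pow_eq_one.mpr ⟨2, by norm_num, by rw [pow_two]; exact h⟩

lemma commute_of_conj_eq {x u : G} (h : u⁻¹ * x * u = x) : Commute x u := by
  have : x * u = u * x := by
    conv_rhs => rw [← h]
    group
  exact this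

/-- An infinite-order good element commutes with each of its conjugates. -/
lemma A1 {x : G} (hx : Good x) (hinf : ¬ IsOfFinOrder x) (g : G) :
    Commute x (g⁻¹ * x * g) := by
  set u := g⁻¹ * x * g with hu
  have hugood : Good u := good_conj hx g
  have huinf : ¬ IsOfFinOrder u := not_isOfFinOrder_conj g hinf
  have humem : u ∈ Subgroup.normalClosure ({x} : Set G) := conj_mem_ncl x g
  obtain ⟨a, ha⟩ := Subgroup.mem_zpowers_iff.mp (by simpa using hx u humem 1)
  obtain ⟨b, hb⟩ := Subgroup.mem_zpowers_iff.mp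
    (by simpa using hx u⁻¹ (inv_mem humem) 1)
  -- ha : x ^ a = u * x * u⁻¹,  hb : x ^ b = u⁻¹ * x * u
  have hba : x ^ (b * a) = x ^ (1 : ℤ) := by
    rw [zpow_mul, hb, conj_zpow', ha, zpow_one]
    group
  have h1 : b * a = 1 := injective_zpow_iff_not_isOfFinOrder.mpr hinf hba
  rcases Int.mul_eq_one_iff_eq_one_or_neg_one.mp h1 with ⟨hb1, _⟩ | ⟨hb1, _⟩
  · rw [hb1, zpow_one] at hb
    exact commute_of_conj_eq hb.symm
  · exfalso
    rw [hb1] at hb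
    have heq1 : u⁻¹ * x * u = x⁻¹ := by rw [← hb, zpow_neg_one]
    -- now the u-side
    have hxmem : x ∈ Subgroup.normalClosure ({u} : Set G) := by
      rw [hu, ncl_conj]; exact mem_ncl_self x
    obtain ⟨c, hc⟩ := Subgroup.mem_zpowers_iff.mp (by simpa using hugood x hxmem 1)
    obtain ⟨d, hd⟩ := Subgroup.mem_zpowers_iff.mp
      (by simpa using hugood x⁻¹ (inv_mem hxmem) 1)
    -- hc : u ^ c = x * u * x⁻¹,  hd : u ^ d = x⁻¹ * u * x
    have hdc : u ^ (d * c) = u ^ (1 : ℤ) := by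
      rw [zpow_mul, hd, conj_zpow', hc, zpow_one]
      group
    have h2 : d * c = 1 := injective_zpow_iff_not_isOfFinOrder.mpr huinf hdc
    rcases Int.mul_eq_one_iff_eq_one_or_neg_one.mp h2 with ⟨hd1, _⟩ | ⟨hd1, _⟩
    · -- x⁻¹ * u * x = u : x and u commute, contradicting heq1
      rw [hd1, zpow_one] at hd
      have hcom : Commute u x := commute_of_conj_eq hd.symm
      have h6 : u⁻¹ * x * u = x := by
        have h5 : x * u = u * x := hcom.symm.eq
        calc u⁻¹ * x * u = u⁻¹ * (x * u) := by group
        _ = u⁻¹ * (u * x) := by rw [h5]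
        _ = x := by group
      rw [heq1] at h6
      apply hinf
      apply finOrder_of_sq
      nth_rewrite 1 [← h6]
      group
    · -- u⁻¹xu = x⁻¹ and x⁻¹ux = u⁻¹ : derive u⁴ = 1
      rw [hd1] at hd
      have heq2 : x⁻¹ * u * x = u⁻¹ := by rw [← hd, zpow_neg_one]
      have hA : x * u = u * x⁻¹ := by
        have h3 : u * (u⁻¹ * x * u) = u * x⁻¹ := by rw [heq1]
        calc x * u = u * (u⁻¹ * x * u) := by group
        _ = u * x⁻¹ := h3
      have hB : u * x = x * u⁻¹ := by
        have h4 : x * (x⁻¹ * u * x) = x * u⁻¹ := by rw [heq2]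
        calc u * x = x * (x⁻¹ * u * x) := by group
        _ = x * u⁻¹ := h4
      have hxx : x * x = u * u := by
        have s1 : x * u * (x * u) = u * u := by
          calc x * u * (x * u) = (x * u) * x * u := by group
          _ = (u * x⁻¹) * x * u := by rw [hA]
          _ = u * u := by group
        have s2 : x * u * (x * u) = x * x := by
          calc x * u * (x * u) = x * (u * x) * u := by group
          _ = x * (x * u⁻¹) * u := by rw [hB]
          _ = x * x := by group
        rw [← s2, s1]
      have s3 : x * x * u = u * (x⁻¹ * x⁻¹) := by
        calc x * x * u = x * (x * u) := by group
        _ = x * (u * x⁻¹) := by rw [hA]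
        _ = (x * u) * x⁻¹ := by group
        _ = (u * x⁻¹) * x⁻¹ := by rw [hA]
        _ = u * (x⁻¹ * x⁻¹) := by group
      have hxinv : x⁻¹ * x⁻¹ = (u * u)⁻¹ := by
        rw [← hxx]; group
      have hu4 : u ^ 4 = 1 := by
        have s4 : u * u * u = u * (u * u)⁻¹ := by
          rw [← hxinv, ← s3, hxx]
        have p4 : u ^ 4 = (u * u * u) * u := by
          rw [pow_succ, pow_succ, pow_succ, pow_one]
        rw [p4, s4]
        group
      exact huinf (isOfFinOrder_iff_pow_eq_one.mpr ⟨4, by norm_num, hu4⟩)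

/-- All pairs of conjugates of a good infinite-order element commute. -/
lemma CCinf {x : G} (hx : Good x) (hinf : ¬ IsOfFinOrder x) (g h : G) :
    Commute (g⁻¹ * x * g) (h⁻¹ * x * h) := by
  have base := A1 (good_conj hx g) (not_isOfFinOrder_conj g hinf) (g⁻¹ * h)
  have e : (g⁻¹ * h)⁻¹ * (g⁻¹ * x * g) * (g⁻¹ * h) = h⁻¹ * x * h := by group
  rwa [e] at base

/-- The normal closure of a good torsion element is a torsion subgroup. -/
lemma F0 {p : G} (hp : Good p) (hpf : IsOfFinOrder p) :
    ∀ w ∈ Subgroup.normalClosure ({p} : Set G), IsOfFinOrder w := by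
  set K := Subgroup.normalClosure ({p} : Set G) with hK
  -- the invariant carried through the closure induction
  set Φ : G → Prop := fun w =>
    ∃ H : Subgroup G, w ∈ H ∧ (H : Set G).Finite ∧
      (∀ n ∈ K, ∀ a ∈ H, n * a * n⁻¹ ∈ H) ∧ H ≤ K with hΦ
  have main : ∀ w ∈ K, Φ w := by
    intro w hw
    have hw' : w ∈ Subgroup.closure (Group.conjugatesOfSet ({p} : Set G)) := hw
    refine Subgroup.closure_induction (p := fun w _ => Φ w) ?_ ?_ ?_ ?_ hw'
    · -- generators: conjugates of p
      intro y hy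
      obtain ⟨q, hq, hconj⟩ := Group.mem_conjugatesOfSet_iff.mp hy
      rw [Set.mem_singleton_iff] at hq
      rw [hq] at hconj
      obtain ⟨c, hc⟩ := isConj_iff.mp hconj
      have hyg : Good y := by
        rw [← hc]; exact good_conj' hp c
      have hyf : IsOfFinOrder y := by
        rw [← hc]
        have := isOfFinOrder_conj c⁻¹ hpf
        simpa using this
      have hymem : y ∈ K := Subgroup.conjugatesOfSet_subset_normalClosure hy
      refine ⟨Subgroup.zpowers y, Subgroup.mem_zpowers y, ?_, ?_, ?_⟩
      · exact finite_zpowers.mpr hyf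
      · intro n hn a ha
        obtain ⟨k, hk⟩ := Subgroup.mem_zpowers_iff.mp ha
        have hn' : n ∈ Subgroup.normalClosure ({y} : Set G) := by
          have : Subgroup.normalClosure ({y} : Set G) = K := by
            rw [← hc]
            have := ncl_conj p c⁻¹
            simpa using this
          rw [this]; exact hn
        rw [← hk]
        exact hyg n hn' k
      · exact Subgroup.zpowers_le.mpr hymem
    · -- one
      exact ⟨⊥, Subgroup.one_mem ⊥, by simp, by intro n _ a ha; simp_all, bot_le⟩
    · -- mul
      rintro w₁ w₂ hw₁ hw₂ ⟨H₁, hm₁, hf₁, hst₁, hle₁⟩ ⟨H₂, hm₂, hf₂, hst₂, hle₂⟩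
      refine ⟨{
        carrier := (H₁ : Set G) * (H₂ : Set G)
        one_mem' := ⟨1, H₁.one_mem, 1, H₂.one_mem, by simp⟩
        mul_mem' := ?_
        inv_mem' := ?_ }, ?_, ?_, ?_, ?_⟩
      · rintro a b ⟨x₁, hx₁, y₁, hy₁, rfl⟩ ⟨x₂, hx₂, y₂, hy₂, rfl⟩
        refine ⟨x₁ * (y₁ * x₂ * y₁⁻¹), mul_mem hx₁ (hst₁ y₁ (hle₂ hy₁) x₂ hx₂),
          y₁ * y₂, mul_mem hy₁ hy₂, by group⟩
      · rintro a ⟨x₁, hx₁, y₁, hy₁, rfl⟩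
        refine ⟨y₁⁻¹ * x₁⁻¹ * y₁,
          (by simpa using hst₁ y₁⁻¹ (inv_mem (hle₂ hy₁)) x₁⁻¹ (inv_mem hx₁)), y₁⁻¹,
          inv_mem hy₁, by group⟩
      · exact ⟨w₁, hm₁, w₂, hm₂, rfl⟩
      · exact hf₁.mul hf₂
      · rintro n hn a ⟨x₁, hx₁, y₁, hy₁, rfl⟩
        exact ⟨n * x₁ * n⁻¹, hst₁ n hn x₁ hx₁, n * y₁ * n⁻¹, hst₂ n hn y₁ hy₁, by group⟩
      · rintro a ⟨x₁, hx₁, y₁, hy₁, rfl⟩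
        exact mul_mem (hle₁ hx₁) (hle₂ hy₁)
    · -- inv
      rintro w hw ⟨H, hm, hf, hst, hle⟩
      exact ⟨H, inv_mem hm, hf, hst, hle⟩
  intro w hw
  obtain ⟨H, hm, hf, _, _⟩ := main w hw
  by_contra hfin
  have hinj : Function.Injective (fun n : ℕ => w ^ n) :=
    injective_pow_iff_not_isOfFinOrder.mpr hfin
  have hsub : Set.range (fun n : ℕ => w ^ n) ⊆ (H : Set G) := by
    rintro _ ⟨n, rfl⟩
    exact pow_mem hm n
  exact (hf.subset hsub).not_infinite (Set.infinite_range_of_injective hinj)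

/-- Product of two good torsion elements is torsion. -/
lemma Fmul {p q : G} (hp : Good p) (hpf : IsOfFinOrder p) (hq : Good q)
    (hqf : IsOfFinOrder q) : IsOfFinOrder (p * q) := by
  set N := Subgroup.normalClosure ({p} : Set G) with hN
  haveI : N.Normal := Subgroup.normalClosure_normal
  have h1 : IsOfFinOrder ((p * q : G) : G ⧸ N) := by
    have e : ((p * q : G) : G ⧸ N) = ((q : G) : G ⧸ N) := by
      rw [QuotientGroup.mk_mul]
      have : ((p : G) : G ⧸ N) = 1 := (QuotientGroup.eq_one_iff p).mpr (mem_ncl_self p)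
      rw [this, one_mul]
    rw [e]
    exact (QuotientGroup.mk' N).isOfFinOrder hqf
  obtain ⟨n, hn, hpow⟩ := isOfFinOrder_iff_pow_eq_one.mp h1
  have hmem : (p * q) ^ n ∈ N := by
    rw [← QuotientGroup.eq_one_iff]
    have e2 : (((p * q) ^ n : G) : G ⧸ N) = ((p * q : G) : G ⧸ N) ^ n := by
      exact map_pow (QuotientGroup.mk' N) (p * q) n
    rw [e2]
    exact hpow
  have := F0 hp hpf _ hmem
  exact isOfFinOrder_of_pow hn this

/-- Claim G: conjugation by a good torsion element moves an element with
pairwise-commuting conjugates only by a torsion element. -/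
lemma claimG {u z : G} (hu : Good u) (huf : IsOfFinOrder u)
    (hz : ∀ g h : G, Commute (g⁻¹ * z * g) (h⁻¹ * z * h)) :
    IsOfFinOrder (z⁻¹ * (u⁻¹ * z * u)) := by
  set c := z⁻¹ * (u⁻¹ * z * u) with hc
  have hcinv : c⁻¹ ∈ Subgroup.normalClosure ({u} : Set G) := by
    have e : c⁻¹ = u⁻¹ * (z⁻¹ * u * z) := by rw [hc]; group
    rw [e]
    exact mul_mem (inv_mem (mem_ncl_self u)) (conj_mem_ncl u z)
  obtain ⟨k, hk⟩ := Subgroup.mem_zpowers_iff.mp (by simpa using hu c⁻¹ hcinv 1)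
  -- hk : u ^ k = c⁻¹ * u * c
  set d := u⁻¹ * (c⁻¹ * u * c) with hd
  have hd2 : d = u ^ (-1 + k) := by
    rw [hd, ← hk, zpow_add, zpow_neg_one]
  set n := orderOf u with hn
  have hnpos : 0 < n := huf.orderOf_pos
  have hun : u ^ n = 1 := pow_orderOf_eq_one u
  have hdn : d ^ n = 1 := by
    rw [hd2, ← zpow_natCast, ← zpow_mul, mul_comm, zpow_mul, zpow_natCast, hun, one_zpow]
  have hdu : u⁻¹ * d * u = d := by
    have hcm : Commute u d := by rw [hd2]; exact Commute.zpow_right (Commute.refl u) _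
    calc u⁻¹ * d * u = u⁻¹ * (d * u) := by group
    _ = u⁻¹ * (u * d) := by rw [← hcm.eq]
    _ = d := by group
  -- commuting facts inside the "z-world"
  have hzz : ∀ g : G, Commute z (g⁻¹ * z * g) := by
    intro g
    have := hz 1 g
    simpa using this
  have hcz : ∀ g : G, Commute c (g⁻¹ * z * g) := by
    intro g
    refine Commute.mul_left ?_ ?_
    · exact (hzz g).inv_left
    · exact hz u g
  have hzc : Commute z c := by
    refine Commute.mul_right (Commute.refl z).inv_right ?_
    exact hzz u
  have hcd : Commute c d := by
    have e : d = (u⁻¹ * c * u)⁻¹ * c := by rw [hd]; group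
    rw [e]
    refine Commute.mul_right ?_ (Commute.refl c)
    refine Commute.inv_right ?_
    have e2 : u⁻¹ * c * u = (u⁻¹ * z⁻¹ * u) * ((u * u)⁻¹ * z * (u * u)) := by
      rw [hc]; group
    rw [e2]
    refine Commute.mul_right ?_ (hcz (u * u))
    have e3 : u⁻¹ * z⁻¹ * u = (u⁻¹ * z * u)⁻¹ := by group
    rw [e3]
    exact (hcz u).inv_right
  -- the main telescoping induction
  have key : ∀ i : ℕ, ∃ m : ℤ, (u ^ i)⁻¹ * z * u ^ i = z * c ^ i * d ^ m := by
    intro i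
    induction i with
    | zero => exact ⟨0, by simp⟩
    | succ i ih =>
      obtain ⟨m, hm⟩ := ih
      refine ⟨m - i, ?_⟩
      have step : (u ^ (i + 1))⁻¹ * z * u ^ (i + 1)
          = u⁻¹ * ((u ^ i)⁻¹ * z * u ^ i) * u := by
        rw [pow_succ]; group
      rw [step, hm]
      have dist : u⁻¹ * (z * c ^ i * d ^ m) * u
          = (u⁻¹ * z * u) * (u⁻¹ * c ^ i * u) * (u⁻¹ * d ^ m * u) := by group
      rw [dist]
      have e4 : u⁻¹ * z * u = z * c := by rw [hc]; group
      have e5 : u⁻¹ * c ^ i * u = (c * d⁻¹) ^ i := by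
        rw [← conj_pow']
        congr 1
        have : u⁻¹ * c * u = c * d⁻¹ := by rw [hd]; group
        rw [this]
      have e6 : u⁻¹ * d ^ m * u = d ^ m := by
        rw [← conj_zpow', hdu]
      rw [e4, e5, e6]
      have e7 : (c * d⁻¹) ^ i = c ^ i * (d⁻¹) ^ i := (hcd.inv_right).mul_pow i
      rw [e7]
      have e8 : (d⁻¹ : G) ^ i = d ^ (-(i : ℤ)) := by
        rw [inv_pow, ← zpow_natCast, ← zpow_neg]
      rw [e8]
      have e9 : d ^ (-(i : ℤ)) * d ^ m = d ^ (m - i) := by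
        rw [← zpow_add]
        congr 1
        ring
      calc z * c * (c ^ i * d ^ (-(i:ℤ))) * d ^ m
          = z * (c * c ^ i) * (d ^ (-(i:ℤ)) * d ^ m) := by group
      _ = z * c ^ (i + 1) * d ^ (m - i) := by rw [e9, ← pow_succ']
  obtain ⟨m, hm⟩ := key n
  rw [hun] at hm
  have h10 : z * (c ^ n * d ^ m) = z * 1 := by
    have : z = z * c ^ n * d ^ m := by
      calc z = 1⁻¹ * z * 1 := by group
      _ = z * c ^ n * d ^ m := hm
    rw [mul_one]
    rw [← mul_assoc]
    exact this.symm
  have h11 : c ^ n * d ^ m = 1 := mul_left_cancel h10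
  have h12 : c ^ n = d ^ (-m) := by
    rw [zpow_neg, eq_inv_iff_mul_eq_one]
    exact h11
  have h13 : c ^ (n * n) = 1 := by
    rw [pow_mul, h12, ← zpow_natCast, ← zpow_mul]
    rw [show (-m) * (n : ℤ) = (n : ℤ) * (-m) by ring, zpow_mul, zpow_natCast, hdn, one_zpow]
  exact isOfFinOrder_iff_pow_eq_one.mpr ⟨n * n, by positivity, h13⟩

/-- Elements outside T2 are good. -/
lemma good_of_not_mem {x : G} (h : x ∉ T2 G) : Good x := by
  have h2 : IsTwoSubnormal (zpowers x) := by
    by_contra hns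
    exact h (Subgroup.subset_closure hns)
  obtain ⟨K, hle, hnorm, hKnorm⟩ := h2
  haveI := hKnorm
  have hncl : Subgroup.normalClosure ({x} : Set G) ≤ K :=
    Subgroup.normalClosure_le_normal (by simpa using hle (Subgroup.mem_zpowers x))
  intro n hn k
  have hnK : n ∈ K := hncl hn
  have hxK : x ^ k ∈ K := hle (Subgroup.mem_zpowers_iff.mpr ⟨k, rfl⟩)
  have hmem : (⟨x ^ k, hxK⟩ : K) ∈ (zpowers x).subgroupOf K :=
    Subgroup.mem_subgroupOf.mpr (Subgroup.mem_zpowers_iff.mpr ⟨k, rfl⟩)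
  have := hnorm.conj_mem _ hmem ⟨n, hnK⟩
  exact Subgroup.mem_subgroupOf.mp this

/-- From a good torsion element acting on z, a fixed power of z. -/
lemma conj_fix_pow {x z : G} (hzz : ∀ g h : G, Commute (g⁻¹ * z * g) (h⁻¹ * z * h))
    (hcf : IsOfFinOrder (z⁻¹ * (x⁻¹ * z * x))) {m : ℕ}
    (hdvd : orderOf (z⁻¹ * (x⁻¹ * z * x)) ∣ m) : Commute x (z ^ m) := by
  set c := z⁻¹ * (x⁻¹ * z * x) with hc
  have hcm : c ^ m = 1 := orderOf_dvd_iff_pow_eq_one.mp hdvd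
  have hcomm : Commute z c := by
    refine Commute.mul_right (Commute.refl z).inv_right ?_
    have := hzz 1 x
    simpa using this
  have h1 : x⁻¹ * z ^ m * x = z ^ m := by
    have e1 : x⁻¹ * z ^ m * x = (x⁻¹ * z * x) ^ m := (conj_pow' x z m).symm
    have e2 : x⁻¹ * z * x = z * c := by rw [hc]; group
    rw [e1, e2, hcomm.mul_pow, hcm, mul_one]
  have : z ^ m * x = x * z ^ m := by
    calc z ^ m * x = x * (x⁻¹ * z ^ m * x) := by group
    _ = x * z ^ m := by rw [h1]
  exact this.symm

/-- The core commuting machinery. -/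
lemma lemRcore {x h z : G} (hxT : x ∉ T2 G) (hxf : IsOfFinOrder x)
    (hzT : z ∉ T2 G) (hzf : ¬ IsOfFinOrder z)
    {m : ℕ} (hm : 0 < m) (hZx : Commute x (z ^ m)) (hZh : Commute h (z ^ m)) :
    Commute x (h⁻¹ * x * h) := by
  obtain ⟨W, hWT, hWcx, hWch, hWinf⟩ :
      ∃ W : G, x * W ∉ T2 G ∧ Commute x W ∧ Commute h W ∧ ¬ IsOfFinOrder W := by
    by_cases h1 : x * z ^ m ∈ T2 G
    · by_cases h2 : x * (z ^ m * z ^ m) ∈ T2 G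
      · exfalso
        have hzm : z ^ m ∈ T2 G := by
          have e : z ^ m = (x * z ^ m)⁻¹ * (x * (z ^ m * z ^ m)) := by group
          rw [e]
          exact mul_mem (inv_mem h1) h2
        have : x ∈ T2 G := by
          have e : x = (x * z ^ m) * (z ^ m)⁻¹ := by group
          rw [e]
          exact mul_mem h1 (inv_mem hzm)
        exact hxT this
      · refine ⟨z ^ m * z ^ m, h2, hZx.mul_right hZx, hZh.mul_right hZh, ?_⟩
        intro hf
        apply not_isOfFinOrder_pow (z := z) (m := m + m) (by positivity) hzf
        rw [pow_add]
        exact hf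
    · exact ⟨z ^ m, h1, hZx, hZh, not_isOfFinOrder_pow hm hzf⟩
  set W2 := W with hW2
  have hζg : Good (x * W) := good_of_not_mem hWT
  have hζinf : ¬ IsOfFinOrder (x * W) := by
    intro hf
    apply hWinf
    have := Fmul (good_inv (good_of_not_mem hxT)) hxf.inv hζg hf
    have e : x⁻¹ * (x * W) = W := by group
    rwa [e] at this
  have hcc := CCinf hζg hζinf 1 h
  have e0 : (1 : G)⁻¹ * (x * W) * 1 = x * W := by group
  rw [e0] at hcc
  -- compute the conjugate
  have hWh : h⁻¹ * W * h = W := by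
    calc h⁻¹ * W * h = h⁻¹ * (W * h) := by group
    _ = h⁻¹ * (h * W) := by rw [← hWch.eq]
    _ = W := by group
  have hWh' : h * W * h⁻¹ = W := by
    have hiW : h⁻¹ * W = W * h⁻¹ := (hWch.inv_left).eq
    calc h * W * h⁻¹ = h * (W * h⁻¹) := by group
    _ = h * (h⁻¹ * W) := by rw [← hiW]
    _ = W := by group
  have hsplit : h⁻¹ * (x * W) * h = (h⁻¹ * x * h) * W := by
    calc h⁻¹ * (x * W) * h = (h⁻¹ * x * h) * (h⁻¹ * W * h) := by group
    _ = (h⁻¹ * x * h) * W := by rw [hWh]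
  rw [hsplit] at hcc
  -- hcc : Commute (x * W) ((h⁻¹ * x * h) * W)
  have hxhW : Commute (h⁻¹ * x * h) W := by
    have : (h⁻¹ * x * h) * W = W * (h⁻¹ * x * h) := by
      calc (h⁻¹ * x * h) * W = h⁻¹ * (x * (h * W * h⁻¹)) * h := by group
      _ = h⁻¹ * (x * W) * h := by rw [hWh']
      _ = h⁻¹ * (W * x) * h := by rw [hWcx.eq]
      _ = (h⁻¹ * W * h) * (h⁻¹ * x * h) := by group
      _ = W * (h⁻¹ * x * h) := by rw [hWh]
    exact this
  have main := hcc.eq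
  have l1 : (x * W) * ((h⁻¹ * x * h) * W) = (x * (h⁻¹ * x * h)) * (W * W) := by
    calc (x * W) * ((h⁻¹ * x * h) * W) = x * (W * (h⁻¹ * x * h)) * W := by group
    _ = x * ((h⁻¹ * x * h) * W) * W := by rw [← hxhW.eq]
    _ = (x * (h⁻¹ * x * h)) * (W * W) := by group
  have r1 : ((h⁻¹ * x * h) * W) * (x * W) = ((h⁻¹ * x * h) * x) * (W * W) := by
    calc ((h⁻¹ * x * h) * W) * (x * W) = (h⁻¹ * x * h) * (W * x) * W := by group
    _ = (h⁻¹ * x * h) * (x * W) * W := by rw [← hWcx.eq]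
    _ = ((h⁻¹ * x * h) * x) * (W * W) := by group
  rw [l1, r1] at main
  exact mul_right_cancel main

lemma exists_not_mem_of_ne_top (hT : T2 G ≠ ⊤) : ∃ s : G, s ∉ T2 G := by
  by_contra hall
  push_neg at hall
  exact hT ((Subgroup.eq_top_iff' (T2 G)).mpr hall)

/-- There is an infinite-order element outside T2. -/
lemma zex (hnt : ∃ x : G, ¬ IsOfFinOrder x) (hT : T2 G ≠ ⊤) :
    ∃ z : G, z ∉ T2 G ∧ ¬ IsOfFinOrder z := by
  obtain ⟨t, ht⟩ := hnt
  by_cases htT : t ∈ T2 G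
  · obtain ⟨s, hs⟩ := exists_not_mem_of_ne_top hT
    by_cases hsf : IsOfFinOrder s
    · refine ⟨s * t, ?_, ?_⟩
      · intro hm
        exact hs (by
          have e : s = (s * t) * t⁻¹ := by group
          rw [e]; exact mul_mem hm (inv_mem htT))
      · intro hf
        apply ht
        have := Fmul (good_inv (good_of_not_mem hs)) hsf.inv
          (good_of_not_mem (by
            intro hm
            exact hs (by
              have e : s = (s * t) * t⁻¹ := by group
              rw [e]; exact mul_mem hm (inv_mem htT)))) hf
        have e : s⁻¹ * (s * t) = t := by group
        rwa [e] at this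
    · exact ⟨s, hs, hsf⟩
  · exact ⟨t, htT, ht⟩

/-- Good torsion elements commute with conjugates by elements outside T2. -/
lemma lemR (hnt : ∃ x : G, ¬ IsOfFinOrder x) (hT : T2 G ≠ ⊤)
    {x : G} (hxT : x ∉ T2 G) (hxf : IsOfFinOrder x)
    {h : G} (hhT : h ∉ T2 G) : Commute x (h⁻¹ * x * h) := by
  by_cases hhf : IsOfFinOrder h
  · -- torsion conjugator
    obtain ⟨z, hzT, hzf⟩ := zex hnt hT
    have hzcc := CCinf (good_of_not_mem hzT) hzf
    have c1 := claimG (good_of_not_mem hxT) hxf hzcc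
    have c2 := claimG (good_of_not_mem hhT) hhf hzcc
    set m := orderOf (z⁻¹ * (x⁻¹ * z * x)) * orderOf (z⁻¹ * (h⁻¹ * z * h)) with hm
    have hmpos : 0 < m := mul_pos c1.orderOf_pos c2.orderOf_pos
    have hZx : Commute x (z ^ m) := conj_fix_pow hzcc c1 (Dvd.intro _ rfl)
    have hZh : Commute h (z ^ m) := conj_fix_pow hzcc c2 (Dvd.intro_left _ rfl)
    exact lemRcore hxT hxf hzT hzf hmpos hZx hZh
  · -- infinite-order conjugator : use z := h
    have hzcc := CCinf (good_of_not_mem hhT) hhf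
    have c1 := claimG (good_of_not_mem hxT) hxf hzcc
    set m := orderOf (h⁻¹ * (x⁻¹ * h * x)) with hm
    have hmpos : 0 < m := c1.orderOf_pos
    have hZx : Commute x (h ^ m) := conj_fix_pow hzcc c1 dvd_rfl
    have hZh : Commute h (h ^ m) := Commute.pow_right (Commute.refl h) m
    exact lemRcore hxT hxf hhT hhf hmpos hZx hZh

/-- A good torsion element commutes with all of its conjugates. -/
lemma A2 (hnt : ∃ x : G, ¬ IsOfFinOrder x) (hT : T2 G ≠ ⊤)
    {x : G} (hxT : x ∉ T2 G) (hxf : IsOfFinOrder x) (g : G) :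
    Commute x (g⁻¹ * x * g) := by
  by_cases hgT : g ∈ T2 G
  · have hxg : x * g ∉ T2 G := by
      intro hm
      exact hxT (by
        have e : x = (x * g) * g⁻¹ := by group
        rw [e]; exact mul_mem hm (inv_mem hgT))
    have hres := lemR hnt hT hxT hxf hxg
    have e : (x * g)⁻¹ * x * (x * g) = g⁻¹ * x * g := by group
    rwa [e] at hres
  · exact lemR hnt hT hxT hxf hgT

/-- All conjugates of any element outside T2 commute pairwise. -/
lemma CCS (hnt : ∃ x : G, ¬ IsOfFinOrder x) (hT : T2 G ≠ ⊤)
    {x : G} (hxT : x ∉ T2 G) (g h : G) :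
    Commute (g⁻¹ * x * g) (h⁻¹ * x * h) := by
  by_cases hxf : IsOfFinOrder x
  · have base := A2 hnt hT hxT hxf (h * g⁻¹)
    have : Commute (g⁻¹ * x * g) (g⁻¹ * ((h * g⁻¹)⁻¹ * x * (h * g⁻¹)) * g) := by
      have := base.map (MulAut.conj g⁻¹).toMonoidHom
      have e1 : (MulAut.conj g⁻¹).toMonoidHom x = g⁻¹ * x * g := by
        simp [MulAut.conj_apply]
      have e2 : (MulAut.conj g⁻¹).toMonoidHom ((h * g⁻¹)⁻¹ * x * (h * g⁻¹))
          = g⁻¹ * ((h * g⁻¹)⁻¹ * x * (h * g⁻¹)) * g := by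
        simp only [MulEquiv.coe_toMonoidHom, MulAut.conj_apply, inv_inv]
      rwa [e1, e2] at this
    have e3 : g⁻¹ * ((h * g⁻¹)⁻¹ * x * (h * g⁻¹)) * g = h⁻¹ * x * h := by group
    rwa [e3] at this
  · exact CCinf (good_of_not_mem hxT) hxf g h

section Engel

lemma pc_form1 (a b : G) : pc a b = (a⁻¹ * b * a)⁻¹ * b := by
  unfold pc; group

lemma pc_form2 (a b : G) : pc a b = a⁻¹ * (b⁻¹ * a * b) := by
  unfold pc; group

lemma pc_absorb (a b : G) : pc a (a * b) = pc a b := by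
  unfold pc; group

lemma pc_mul (x y z : G) : pc (x * y) z = (y⁻¹ * pc x z * y) * pc y z := by
  unfold pc; group

lemma pc_eq_one_of_commute {X b : G} (h : Commute X b) : pc X b = 1 := by
  unfold pc
  calc X⁻¹ * b⁻¹ * X * b = X⁻¹ * b⁻¹ * (X * b) := by group
  _ = X⁻¹ * b⁻¹ * (b * X) := by rw [h.eq]
  _ = 1 := by group

lemma commute_of_pc_eq_one {X b : G} (h : pc X b = 1) : Commute X b := by
  unfold pc at h
  have h2 : X * (X⁻¹ * b⁻¹ * X * b) = X * 1 := by rw [h]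
  have h3 : b⁻¹ * X * b = X := by
    have : b⁻¹ * X * b = X * 1 := by rw [← h2]; group
    simpa using this
  have : X * b = b * X := by
    calc X * b = b * (b⁻¹ * X * b) := by group
    _ = b * X := by rw [h3]
  exact this

/-- the easy subcase: a ∉ T2, b ∈ T2. -/
lemma engel_sub2 (hnt : ∃ x : G, ¬ IsOfFinOrder x) (hT : T2 G ≠ ⊤)
    {a b : G} (haT : a ∉ T2 G) (hbT : b ∈ T2 G) : Commute (pc a b) b := by
  have hwT : a * b ∉ T2 G := by
    intro hm
    exact haT (by
      have e : a = (a * b) * b⁻¹ := by group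
      rw [e]; exact mul_mem hm (inv_mem hbT))
  have hX1 : Commute (pc a b) a := by
    rw [pc_form2]
    refine Commute.mul_left (Commute.refl a).inv_left ?_
    have := CCS hnt hT haT b 1
    simpa using this
  have hX2 : Commute (pc a b) (a * b) := by
    have e : pc a b = pc a (a * b) := (pc_absorb a b).symm
    rw [e, pc_form1]
    refine Commute.mul_left ?_ (Commute.refl (a * b))
    refine Commute.inv_left ?_
    have := CCS hnt hT hwT a 1
    simpa using this
  have hfin : Commute (pc a b) (a⁻¹ * (a * b)) := hX1.inv_right.mul_right hX2
  simpa using hfin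

/-- Main: T2 ≠ ⊤ implies the 2-Engel law. -/
lemma engel_main (hnt : ∃ x : G, ¬ IsOfFinOrder x) (hT : T2 G ≠ ⊤) (a b : G) :
    pc (pc a b) b = 1 := by
  apply pc_eq_one_of_commute
  by_cases hbT : b ∈ T2 G
  · by_cases haT : a ∈ T2 G
    · -- both in T2
      obtain ⟨s, hsT⟩ := exists_not_mem_of_ne_top hT
      have ha2T : s⁻¹ * a ∉ T2 G := by
        intro hm
        exact hsT (by
          have e : s = a * (s⁻¹ * a)⁻¹ := by group
          rw [e]
          exact mul_mem haT (inv_mem hm))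
      set a2 := s⁻¹ * a with ha2
      have haeq : a = s * a2 := by rw [ha2]; group
      have hsplit : pc a b = (a2⁻¹ * pc s b * a2) * pc a2 b := by
        rw [haeq, pc_mul]
      have fact1 : Commute (pc a2 b) b := engel_sub2 hnt hT ha2T hbT
      have fact2 : Commute (a2⁻¹ * pc s b * a2) b := by
        -- equivalent to: pc s b commutes with a2 * b * a2⁻¹
        have hωT : s * b ∉ T2 G := by
          intro hm
          exact hsT (by
            have e : s = (s * b) * b⁻¹ := by group
            rw [e]; exact mul_mem hm (inv_mem hbT))
        have key : Commute (pc s b) (a2 * b * a2⁻¹) := by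
          have e1 : pc s b = pc s (s * b) := (pc_absorb s b).symm
          have e2 : a2 * b * a2⁻¹ = (a2 * s⁻¹ * a2⁻¹) * (a2 * (s * b) * a2⁻¹) := by group
          rw [e1, e2]
          refine Commute.mul_right ?_ ?_
          · -- pc s (s*b) vs conjugate of s⁻¹ : use the s-conjugate world
            have e3 : a2 * s⁻¹ * a2⁻¹ = ((a2⁻¹)⁻¹ * s * a2⁻¹)⁻¹ := by group
            rw [e3, pc_form2]
            refine Commute.inv_right ?_
            refine Commute.mul_left ?_ ?_
            · exact Commute.inv_left (by
                have := CCS hnt hT hsT 1 a2⁻¹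
                simpa using this)
            · exact CCS hnt hT hsT (s * b) a2⁻¹
          · -- pc s (s*b) vs conjugate of (s*b) : use the (s*b)-conjugate world
            have e4 : a2 * (s * b) * a2⁻¹ = (a2⁻¹)⁻¹ * (s * b) * a2⁻¹ := by group
            rw [e4, pc_form1]
            refine Commute.mul_left ?_ ?_
            · exact Commute.inv_left (CCS hnt hT hωT s a2⁻¹)
            · have := CCS hnt hT hωT 1 a2⁻¹
              simpa using this
        have := key.map (MulAut.conj a2⁻¹).toMonoidHom
        have e5 : (MulAut.conj a2⁻¹).toMonoidHom (pc s b) = a2⁻¹ * pc s b * a2 := by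
          simp [MulAut.conj_apply]
        have e6 : (MulAut.conj a2⁻¹).toMonoidHom (a2 * b * a2⁻¹) = b := by
          simp [MulAut.conj_apply]; group
        rwa [e5, e6] at this
      rw [hsplit]
      exact fact2.mul_left fact1
    · exact engel_sub2 hnt hT haT hbT
  · -- b ∉ T2
    rw [pc_form1]
    refine Commute.mul_left ?_ (Commute.refl b)
    refine Commute.inv_left ?_
    have := CCS hnt hT hbT a 1
    simpa using this

end Engel

section Equiv

/-- From the 2-Engel law, every element commutes with all its conjugates. -/
lemma engel_ccs (hE : ∀ a b : G, pc (pc a b) b = 1) (b : G) :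
    ∀ g h : G, Commute (g⁻¹ * b * g) (h⁻¹ * b * h) := by
  have single : ∀ a : G, Commute (a⁻¹ * b * a) b := by
    intro a
    have h1 : Commute (pc a b) b := commute_of_pc_eq_one (hE a b)
    rw [pc_form1] at h1
    have h2 : Commute (((a⁻¹ * b * a)⁻¹ * b) * b⁻¹) b :=
      Commute.mul_left h1 (Commute.refl b).inv_left
    have h3 : Commute ((a⁻¹ * b * a)⁻¹) b := by
      have e : ((a⁻¹ * b * a)⁻¹ * b) * b⁻¹ = (a⁻¹ * b * a)⁻¹ := by group
      rwa [e] at h2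
    have := h3.inv_left
    simpa using this
  intro g h
  have base := single (h * g⁻¹)
  have conj := base.map (MulAut.conj g⁻¹).toMonoidHom
  have e1 : (MulAut.conj g⁻¹).toMonoidHom ((h * g⁻¹)⁻¹ * b * (h * g⁻¹)) = h⁻¹ * b * h := by
    simp [MulAut.conj_apply]; group
  have e2 : (MulAut.conj g⁻¹).toMonoidHom b = g⁻¹ * b * g := by
    simp [MulAut.conj_apply]
  rw [e1, e2] at conj
  exact conj.symm

/-- From the 2-Engel law, every cyclic subgroup is 2-subnormal. -/
lemma engel_twoSubnormal (hE : ∀ a b : G, pc (pc a b) b = 1) (x : G) :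
    IsTwoSubnormal (zpowers x) := by
  set K := Subgroup.normalClosure ({x} : Set G) with hK
  -- K is abelian
  have habel : ∀ p ∈ K, ∀ q ∈ K, Commute p q := by
    have hgen : ∀ y ∈ Group.conjugatesOfSet ({x} : Set G),
        ∀ y' ∈ Group.conjugatesOfSet ({x} : Set G), Commute y y' := by
      intro y hy y' hy'
      obtain ⟨q1, hq1, hc1⟩ := Group.mem_conjugatesOfSet_iff.mp hy
      obtain ⟨q2, hq2, hc2⟩ := Group.mem_conjugatesOfSet_iff.mp hy'
      rw [Set.mem_singleton_iff] at hq1 hq2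
      rw [hq1] at hc1; rw [hq2] at hc2
      obtain ⟨c1, hc1'⟩ := isConj_iff.mp hc1
      obtain ⟨c2, hc2'⟩ := isConj_iff.mp hc2
      rw [← hc1', ← hc2']
      have := engel_ccs hE x c1⁻¹ c2⁻¹
      simpa using this
    intro p hp q hq
    have hp' : p ∈ Subgroup.closure (Group.conjugatesOfSet ({x} : Set G)) := hp
    have hq' : q ∈ Subgroup.closure (Group.conjugatesOfSet ({x} : Set G)) := hq
    refine Subgroup.closure_induction₂ (p := fun p q _ _ => Commute p q)
      ?_ ?_ ?_ ?_ ?_ ?_ ?_ hp' hq'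
    · exact fun a b ha hb => hgen a ha b hb
    · exact fun a _ => Commute.one_left a
    · exact fun a _ => Commute.one_right a
    · exact fun a b cc _ _ _ h1 h2 => h1.mul_left h2
    · exact fun a b cc _ _ _ h1 h2 => h1.mul_right h2
    · exact fun a b _ _ h1 => h1.inv_left
    · exact fun a b _ _ h1 => h1.inv_right
  refine ⟨K, ?_, ?_, Subgroup.normalClosure_normal⟩
  · exact Subgroup.zpowers_le.mpr (mem_ncl_self x)
  · constructor
    rintro ⟨nn, hnnK⟩ hnmem ⟨g, hgK⟩
    rw [Subgroup.mem_subgroupOf] at hnmem ⊢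
    obtain ⟨k, hk⟩ := Subgroup.mem_zpowers_iff.mp hnmem
    have hcomm : Commute g nn := habel g hgK nn hnnK
    have : (g * nn * g⁻¹ : G) = nn := by
      calc g * nn * g⁻¹ = (g * nn) * g⁻¹ := by group
      _ = (nn * g) * g⁻¹ := by rw [hcomm.eq]
      _ = nn := by group
    simpa [this, ← hk] using Subgroup.mem_zpowers_iff.mpr ⟨k, hk⟩

end Equiv

end Stmt11Aux

/-- A non-torsion generalized 2-Baer group is 2-Engel; consequently,
for non-torsion groups being 2-Baer, generalized 2-Baer and 2-Engel are all
equivalent. -/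
theorem stmt_11 {G : Type*} [Group G] (hnt : ∃ x : G, ¬ IsOfFinOrder x) :
    (T2 G ≠ ⊤ → ∀ a b : G, pc (pc a b) b = 1) ∧
    ((∀ x : G, IsTwoSubnormal (Subgroup.zpowers x)) ↔ T2 G ≠ ⊤) ∧
    (T2 G ≠ ⊤ ↔ ∀ a b : G, pc (pc a b) b = 1) := by
  have T2bot : (∀ x : G, IsTwoSubnormal (Subgroup.zpowers x)) → T2 G = ⊥ := by
    intro hall
    have hset : {x : G | ¬ IsTwoSubnormal (Subgroup.zpowers x)} = (∅ : Set G) :=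
      Set.eq_empty_iff_forall_notMem.mpr (fun x hx => hx (hall x))
    rw [T2, hset, Subgroup.closure_empty]
  have botne : (⊥ : Subgroup G) ≠ ⊤ := by
    intro hbt
    obtain ⟨t, ht⟩ := hnt
    have : t ∈ (⊥ : Subgroup G) := by rw [hbt]; exact Subgroup.mem_top t
    rw [Subgroup.mem_bot] at this
    rw [this] at ht
    exact ht IsOfFinOrder.one
  refine ⟨Stmt11Aux.engel_main hnt, ⟨?_, ?_⟩, ?_, ?_⟩
  · intro hall
    rw [T2bot hall]
    exact botne
  · intro hT x
    exact Stmt11Aux.engel_twoSubnormal (Stmt11Aux.engel_main hnt hT) x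
  · exact Stmt11Aux.engel_main hnt
  · intro hE
    rw [T2bot (Stmt11Aux.engel_twoSubnormal hE)]
    exact botne
end

section
/- In a metabelian group G, for all x, y, z ∈ G and all n ≥ 1: [xy, z, z, …, z] (n copies of z) = [x,ₙ z]·[x,ₙ z, y]·[y,ₙ z], where [a,ₙ b] denotes the n-fold iterated commutator [...[[a,b],b],...,b]. -/
/-- The iterated commutator [a,ₙ b]: [a,₁ b] = [a,b], [a,ₖ₊₁ b] = [[a,ₖ b], b]. -/
def pcIter {G : Type*} [Group G] (a b : G) : ℕ → G
  | 0 => a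
  | n + 1 => pc (pcIter a b n) b

/-!
Since `G'` is abelian, `u ↦ [u, z]` is multiplicative on `G'`, and conjugations by `y * z`
and by `z * y` agree on `G'` (they differ by `[y, z] ∈ G'`); expanding `[a, y * z]` in both
orders then gives `[a, y, z] = [a, z, y]` for `a ∈ G'`. Expanding `[xy, z]` once and then
commuting each further `z` past `y` gives the formula by induction on `n`.
-/

section Commutator

variable {G : Type*} [Group G]

open scoped commutatorElement in
lemma pc_eq_commutatorElement (a b : G) : pc a b = ⁅a⁻¹, b⁻¹⁆ := by
  simp [pc, commutatorElement_def]

lemma pc_mem_commutator (a b : G) : pc a b ∈ commutator G := by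
  rw [pc_eq_commutatorElement, commutator_def]
  exact Subgroup.commutator_mem_commutator (Subgroup.mem_top _) (Subgroup.mem_top _)

lemma pcIter_mem_commutator (a b : G) {n : ℕ} (hn : 1 ≤ n) : pcIter a b n ∈ commutator G := by
  obtain ⟨m, rfl⟩ := Nat.exists_eq_add_of_le' hn
  exact pc_mem_commutator _ _

lemma pc_mul_left (u v z : G) : pc (u * v) z = pc u z * pc (pc u z) v * pc v z := by
  simp only [pc]; group

lemma pc_mul_right (a y z : G) : pc a (y * z) = pc a z * pc a y * pc (pc a y) z := by
  simp only [pc]; group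

lemma mul_eq_mul_mul_pc (y z : G) : y * z = z * y * pc y z := by
  simp only [pc]; group

lemma pc_mul_left_of_mem_commutator
    (hmet : ∀ a ∈ commutator G, ∀ b ∈ commutator G, a * b = b * a)
    (u : G) {v : G} (hv : v ∈ commutator G) (z : G) :
    pc (u * v) z = pc u z * pc v z := by
  rw [pc_mul_left, pc_eq_one_of_commute (hmet _ (pc_mem_commutator u z) _ hv), mul_one]

lemma pc_mul_comm_of_mem_commutator
    (hmet : ∀ a ∈ commutator G, ∀ b ∈ commutator G, a * b = b * a)
    {a : G} (ha : a ∈ commutator G) (y z : G) :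
    pc a (y * z) = pc a (z * y) := by
  rw [mul_eq_mul_mul_pc y z, pc_mul_right,
    pc_eq_one_of_commute (hmet _ ha _ (pc_mem_commutator y z)),
    pc_eq_one_of_commute (hmet _ (pc_mem_commutator a _) _ (pc_mem_commutator y z)),
    one_mul, mul_one]

lemma pc_pc_comm_of_mem_commutator
    (hmet : ∀ a ∈ commutator G, ∀ b ∈ commutator G, a * b = b * a)
    {a : G} (ha : a ∈ commutator G) (y z : G) :
    pc (pc a y) z = pc (pc a z) y := by
  have h := pc_mul_comm_of_mem_commutator hmet ha y z
  rw [pc_mul_right, pc_mul_right,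
    hmet _ (pc_mem_commutator a z) _ (pc_mem_commutator a y)] at h
  exact mul_left_cancel h

end Commutator

/-- In a metabelian group, for all x, y, z and n ≥ 1,
[xy,ₙ z] = [x,ₙ z]·[x,ₙ z, y]·[y,ₙ z]. -/
theorem stmt_16 {G : Type*} [Group G]
    (hmet : ∀ a ∈ commutator G, ∀ b ∈ commutator G, a * b = b * a) :
    ∀ (x y z : G) (n : ℕ), 1 ≤ n →
      pcIter (x * y) z n =
        pcIter x z n * pc (pcIter x z n) y * pcIter y z n := by
  intro x y z n hn
  induction n, hn using Nat.le_induction with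
  | base => exact pc_mul_left x y z
  | succ n hn ih =>
    change pc (pcIter (x * y) z n) z =
      pc (pcIter x z n) z * pc (pc (pcIter x z n) z) y * pc (pcIter y z n) z
    rw [ih, pc_mul_left_of_mem_commutator hmet _ (pcIter_mem_commutator y z hn),
      pc_mul_left_of_mem_commutator hmet _ (pc_mem_commutator _ _),
      pc_pc_comm_of_mem_commutator hmet (pcIter_mem_commutator x z hn)]
end
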